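/- Let R be a commutative ring of prime characteristic p and let D : R → R be a derivation. Then the p-fold composite D^p = D ∘ D ∘ ⋯ ∘ D (p times) is again a derivation of R. -/

import Mathlib

/-! By induction, a derivation satisfies the general Leibniz rule
`D^[n] (a * b) = ∑_{i + j = n} (n choose i) D^[i] a * D^[j] b`. For `n = p` prime, every
binomial coefficient `p choose i` with `0 < i < p` is divisible by `p`, so in characteristic `p`
only the two extreme terms `a * D^[p] b` and `D^[p] a * b` survive. -/

open Finset

namespace Derivation

variable {R A : Type*} [CommSemiring R] [CommSemiring A] [Algebra R A]

theorem iterate_apply_mul (D : Derivation R A A) (n : ℕ) (a b : A) :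
    D^[n] (a * b) = ∑ ij ∈ antidiagonal n, n.choose ij.1 • (D^[ij.1] a * D^[ij.2] b) := by
  induction n with
  | zero => simp
  | succ n ih =>
    rw [sum_antidiagonal_choose_succ_nsmul (M := A) (fun i j => D^[i] a * D^[j] b) n]
    simp only [Function.iterate_succ_apply', ih, map_sum, map_nsmul, leibniz, smul_eq_mul,
      nsmul_add, sum_add_distrib]
    congr 1
    refine sum_congr rfl fun ⟨i, j⟩ hij ↦ ?_
    rw [n.choose_symm_of_eq_add (HasAntidiagonal.mem_antidiagonal.1 hij).symm, mul_comm (D^[j] b)]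

theorem iterate_charP_apply_mul (D : Derivation R A A) (p : ℕ) [hp : Fact p.Prime] [CharP A p]
    (a b : A) : D^[p] (a * b) = a * D^[p] b + b * D^[p] a := by
  rw [iterate_apply_mul, sum_eq_add_of_mem (0, p) (p, 0) (by simp) (by simp)
    (by simp [hp.out.ne_zero])]
  · simp [add_comm, mul_comm]
  · rintro ⟨i, j⟩ hij hij_ne
    have hi : i ≠ 0 ∧ i < p := by
      simp only [HasAntidiagonal.mem_antidiagonal, ne_eq, Prod.mk.injEq] at hij hij_ne
      omega
    have hchoose : (p.choose i : A) = 0 :=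
      (CharP.cast_eq_zero_iff A p _).2 (hp.out.dvd_choose_self hi.1 hi.2)
    rw [nsmul_eq_mul, hchoose, zero_mul]

end Derivation

/-- Hochschild's lemma: over a commutative ring of prime characteristic p,
the p-fold composite of a derivation is again a derivation. -/
theorem iterate_derivation_is_derivation
    (R : Type*) [CommRing R] (p : ℕ) [Fact p.Prime] [CharP R p]
    (D : R → R)
    (hadd : ∀ a b : R, D (a + b) = D a + D b)
    (hmul : ∀ a b : R, D (a * b) = a * D b + b * D a) :
    (∀ a b : R, D^[p] (a + b) = D^[p] a + D^[p] b) ∧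
    (∀ a b : R, D^[p] (a * b) = a * D^[p] b + b * D^[p] a) := by
  let D' : Derivation ℤ R R := .mk' (AddMonoidHom.mk' D hadd).toIntLinearMap hmul
  exact ⟨iterate_map_add D' p, D'.iterate_charP_apply_mul p⟩
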